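/- arXiv:2305.00312 — 2 statements merged into one kernel-verified Lean document; each statement's English description precedes it below -/
import Mathlib

section
/- Let m ≥ 1, let ε ≥ 0, let z ∈ ℝ^m be a reference point, and let Y* and Y_T be finite subsets of ℝ^m such that every point y in Y* ∪ Y_T satisfies 0 ≤ z_i − y_i ≤ 1 for every coordinate i ∈ {1,…,m}. Suppose that for every y* ∈ Y* there exists y ∈ Y_T with ‖y − y*‖ ≤ ε (Euclidean norm). Then the hypervolume indicators satisfy HV_z(Y*) − HV_z(Y_T) ≤ |Y*| · ((1+ε)^m − 1). -/
/-!
Match every `y* ∈ Y*` with a point `g y* ∈ Y_T` at distance at most `ε`. The part of the box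
of `y*` not covered by the box of `g y*` is a box of side lengths `a i ∈ [0, 1]` minus a sub-box of
side lengths `c i ≥ a i - ε`, so its volume is at most `∏ (c i + ε) - ∏ c i ≤ (1 + ε) ^ m - 1`.
Summing over `Y*` bounds the part of the union of the `Y*`-boxes outside the union of the
`Y_T`-boxes.
-/

open MeasureTheory
open scoped Classical

/-- The hypervolume indicator of a finite set `Y ⊆ ℝ^m` with respect to a reference point `z`:
the Lebesgue measure of the union over `y ∈ Y` of the axis-parallel boxes `∏ i, [y i, z i]`. -/
noncomputable def hypervolume {m : ℕ} (z : EuclideanSpace ℝ (Fin m))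
    (Y : Finset (EuclideanSpace ℝ (Fin m))) : ENNReal :=
  volume (⋃ y ∈ Y, {x : EuclideanSpace ℝ (Fin m) | ∀ i, y i ≤ x i ∧ x i ≤ z i})

open Set

theorem Finset.prod_add_sub_prod_le {ι : Type*} (s : Finset ι) {c : ι → ℝ} {ε : ℝ}
    (hε : 0 ≤ ε) (hc₀ : ∀ i ∈ s, 0 ≤ c i) (hc₁ : ∀ i ∈ s, c i ≤ 1) :
    ∏ i ∈ s, (c i + ε) - ∏ i ∈ s, c i ≤ (1 + ε) ^ s.card - 1 := by
  induction s using Finset.induction_on with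
  | empty => simp
  | insert j s hj ih =>
    simp only [Finset.mem_insert, forall_eq_or_imp] at hc₀ hc₁
    rw [prod_insert hj, prod_insert hj, card_insert_of_notMem hj, pow_succ]
    set P := ∏ i ∈ s, (c i + ε)
    set Q := ∏ i ∈ s, c i
    have hPQ : P - Q ≤ (1 + ε) ^ s.card - 1 := ih hc₀.2 hc₁.2
    have hQP : Q ≤ P := prod_le_prod hc₀.2 fun i _ => le_add_of_nonneg_right hε
    have hP : P ≤ (1 + ε) ^ s.card := by linarith [prod_le_one hc₀.2 hc₁.2]
    -- `(c j + ε) P - c j Q = c j (P - Q) + ε P ≤ (P - Q) + ε (1 + ε) ^ #s`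
    nlinarith [mul_le_mul_of_nonneg_right (sub_nonneg.2 hc₁.1) (sub_nonneg.2 hQP),
      mul_le_mul_of_nonneg_left hP hε]

theorem measure_biUnion_le_add_sum_sdiff {α β : Type*} [MeasurableSpace α] (μ : Measure α)
    (A : β → Set α) {S T : Finset β} {g : β → β} (hg : ∀ y ∈ S, g y ∈ T) :
    μ (⋃ y ∈ S, A y) ≤ μ (⋃ y ∈ T, A y) + ∑ y ∈ S, μ (A y \ A (g y)) := by
  have hcover : ⋃ y ∈ S, A y ⊆ (⋃ y ∈ T, A y) ∪ ⋃ y ∈ S, A y \ A (g y) := by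
    refine iUnion₂_subset fun y hy x hx => ?_
    by_cases hxg : x ∈ A (g y)
    · exact Or.inl (mem_biUnion (hg y hy) hxg)
    · exact Or.inr (mem_biUnion hy ⟨hx, hxg⟩)
  calc μ (⋃ y ∈ S, A y)
      ≤ μ (⋃ y ∈ T, A y) + μ (⋃ y ∈ S, A y \ A (g y)) :=
        (measure_mono hcover).trans (measure_union_le _ _)
    _ ≤ μ (⋃ y ∈ T, A y) + ∑ y ∈ S, μ (A y \ A (g y)) :=
        add_le_add_right (measure_biUnion_finset_le _ _) _

theorem volume_Icc_sdiff_Icc_le {ι : Type*} [Fintype ι] {a b z : ι → ℝ} {ε : ℝ}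
    (hε : 0 ≤ ε) (ha : a ≤ z) (ha₁ : ∀ i, z i - a i ≤ 1) (hb : b ≤ z) (hba : ∀ i, b i ≤ a i + ε) :
    volume (Icc a z \ Icc b z) ≤ ENNReal.ofReal ((1 + ε) ^ Fintype.card ι - 1) := by
  have hc₀ : ∀ i, 0 ≤ z i - (a ⊔ b) i := fun i => sub_nonneg.2 (sup_le ha hb i)
  have hc₁ : ∀ i, z i - (a ⊔ b) i ≤ 1 := fun i => by
    linarith [ha₁ i, (le_sup_left : a ≤ a ⊔ b) i]
  have hac : ∀ i, z i - a i ≤ z i - (a ⊔ b) i + ε := fun i => by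
    have : (a ⊔ b) i ≤ a i + ε := sup_le (le_add_of_nonneg_right hε) (hba i)
    linarith
  rw [← sdiff_self_inter, Icc_inter_Icc, inf_idem,
    measure_sdiff (Set.Icc_subset_Icc le_sup_left le_rfl) measurableSet_Icc.nullMeasurableSet
      measure_Icc_lt_top.ne,
    Real.volume_Icc_pi, Real.volume_Icc_pi,
    ← ENNReal.ofReal_prod_of_nonneg fun i _ => sub_nonneg.2 (ha i),
    ← ENNReal.ofReal_prod_of_nonneg fun i _ => hc₀ i,
    ← ENNReal.ofReal_sub _ (Finset.prod_nonneg fun i _ => hc₀ i)]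
  refine ENNReal.ofReal_le_ofReal ?_
  calc ∏ i, (z i - a i) - ∏ i, (z i - (a ⊔ b) i)
      ≤ ∏ i, (z i - (a ⊔ b) i + ε) - ∏ i, (z i - (a ⊔ b) i) :=
        sub_le_sub_right (Finset.prod_le_prod (fun i _ => sub_nonneg.2 (ha i)) fun i _ => hac i) _
    _ ≤ (1 + ε) ^ Fintype.card ι - 1 :=
        Finset.prod_add_sub_prod_le _ hε (fun i _ => hc₀ i) fun i _ => hc₁ i

theorem hypervolume_eq_volume_biUnion_Icc {m : ℕ} (z : EuclideanSpace ℝ (Fin m))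
    (Y : Finset (EuclideanSpace ℝ (Fin m))) :
    hypervolume z Y = volume (⋃ y ∈ Y, Icc (WithLp.ofLp y) (WithLp.ofLp z)) := by
  rw [hypervolume, ← (PiLp.volume_preserving_ofLp _).measure_preimage
    (Finset.measurableSet_biUnion Y fun y _ => measurableSet_Icc).nullMeasurableSet]
  congr 1
  ext x
  simp [Pi.le_def, forall_and]

theorem hypervolume_gap_le_card_mul_pow_general
    (m : ℕ) (ε : ℝ)
    (z : EuclideanSpace ℝ (Fin m))
    (Ystar YT : Finset (EuclideanSpace ℝ (Fin m)))
    (hbound : ∀ y ∈ Ystar ∪ YT, ∀ i, 0 ≤ z i - y i ∧ z i - y i ≤ 1)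
    (happrox : ∀ ystar ∈ Ystar, ∃ y ∈ YT, ‖y - ystar‖ ≤ ε) :
    hypervolume z Ystar - hypervolume z YT
      ≤ (Ystar.card : ENNReal) * ENNReal.ofReal ((1 + ε) ^ m - 1) := by
  choose! g hgT hgε using happrox
  have hgap : ∀ y ∈ Ystar, volume (Icc (WithLp.ofLp y) (WithLp.ofLp z) \
      Icc (WithLp.ofLp (g y)) (WithLp.ofLp z)) ≤ ENNReal.ofReal ((1 + ε) ^ m - 1) := by
    intro y hy
    have hy' := hbound y (Finset.mem_union_left _ hy)
    have hgy := hbound (g y) (Finset.mem_union_right _ (hgT y hy))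
    have hcoord (i : Fin m) : g y i ≤ y i + ε := by
      have := (Real.le_norm_self _).trans ((PiLp.norm_apply_le (g y - y) i).trans (hgε y hy))
      rw [PiLp.sub_apply] at this
      linarith
    simpa only [Fintype.card_fin] using volume_Icc_sdiff_Icc_le
      ((norm_nonneg _).trans (hgε y hy)) (fun i => sub_nonneg.1 (hy' i).1) (fun i => (hy' i).2)
      (fun i => sub_nonneg.1 (hgy i).1) hcoord
  rw [tsub_le_iff_left, hypervolume_eq_volume_biUnion_Icc, hypervolume_eq_volume_biUnion_Icc,
    ← nsmul_eq_mul]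
  exact (measure_biUnion_le_add_sum_sdiff _ _ hgT).trans
    (add_le_add_right (Finset.sum_le_card_nsmul _ _ _ hgap) _)

theorem hypervolume_gap_le_card_mul_pow
    (m : ℕ) (hm : 1 ≤ m) (ε : ℝ) (hε : 0 ≤ ε)
    (z : EuclideanSpace ℝ (Fin m))
    (Ystar YT : Finset (EuclideanSpace ℝ (Fin m)))
    (hbound : ∀ y ∈ Ystar ∪ YT, ∀ i, 0 ≤ z i - y i ∧ z i - y i ≤ 1)
    (happrox : ∀ ystar ∈ Ystar, ∃ y ∈ YT, ‖y - ystar‖ ≤ ε) :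
    hypervolume z Ystar - hypervolume z YT
      ≤ (Ystar.card : ENNReal) * ENNReal.ofReal ((1 + ε) ^ m - 1) :=
  hypervolume_gap_le_card_mul_pow_general m ε z Ystar YT hbound happrox
end

section
/- Let m ≥ 1, let 0 ≤ ε ≤ 1, let z ∈ ℝ^m be a reference point, and let Y* and Y_T be finite subsets of ℝ^m such that every point y in Y* ∪ Y_T satisfies 0 ≤ z_i − y_i ≤ 1 for every coordinate i ∈ {1,…,m}. Suppose that for every y* ∈ Y* there exists y ∈ Y_T with ‖y − y*‖ ≤ ε (Euclidean norm). Then HV_z(Y*) − HV_z(Y_T) ≤ |Y*| · m · 2^{m−1} · ε; in particular the hypervolume gap is at most C·m·ε for the constant C = |Y*| · 2^{m−1}. -/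
open MeasureTheory
open scoped Classical

/-!
A point `x` of the box `[a, z]` of a point `a ∈ Y*` that misses the box `[y, z]` of its
approximant `y ∈ Y_T` has `x i < y i ≤ a i + ε` for some coordinate `i`, so it lies in the slab
`[a, z] ∩ {x i ≤ a i + ε}`, whose volume is at most `ε` because all other side lengths are at
most `1`. The `|Y*| · m` slabs therefore cover what `HV(Y_T)` misses of `HV(Y*)`.
-/

namespace EuclideanSpace

variable {ι : Type*}

def box (a b : ι → ℝ) : Set (EuclideanSpace ℝ ι) :=
  {x | ∀ i, a i ≤ x i ∧ x i ≤ b i}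

theorem box_eq_preimage_Icc (a b : ι → ℝ) : box a b = WithLp.ofLp ⁻¹' Set.Icc a b := by
  ext x
  simp [box, Pi.le_def, forall_and]

theorem volume_box [Fintype ι] (a b : ι → ℝ) :
    volume (box a b) = ∏ i, ENNReal.ofReal (b i - a i) := by
  rw [box_eq_preimage_Icc, (PiLp.volume_preserving_ofLp ι).measure_preimage
    measurableSet_Icc.nullMeasurableSet, Real.volume_Icc_pi]

theorem volume_box_update_le [Fintype ι] [DecidableEq ι] {a b : ι → ℝ}
    (hab : ∀ j, b j - a j ≤ 1) (i : ι) (δ : ℝ) :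
    volume (box a (Function.update b i (a i + δ))) ≤ ENNReal.ofReal δ := by
  rw [volume_box, ← Finset.mul_prod_erase _ _ (Finset.mem_univ i)]
  refine mul_le_of_le_one_right' ?_ |>.trans_eq (by simp)
  refine Finset.prod_le_one' fun j hj => ?_
  rw [Function.update_of_ne (Finset.ne_of_mem_erase hj)]
  exact ENNReal.ofReal_le_one.2 (hab j)

theorem box_subset_box_union_iUnion_box_update [DecidableEq ι] {a y : ι → ℝ} {δ : ℝ}
    (hy : ∀ i, y i ≤ a i + δ) (b : ι → ℝ) :
    box a b ⊆ box y b ∪ ⋃ i, box a (Function.update b i (a i + δ)) := by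
  intro x hx
  by_cases hxy : x ∈ box y b
  · exact Or.inl hxy
  obtain ⟨i, hi⟩ : ∃ i, x i < y i := by
    simp only [box, Set.mem_ofPred_eq, not_forall] at hxy
    obtain ⟨i, hi⟩ := hxy
    exact ⟨i, not_le.1 fun h => hi ⟨h, (hx i).2⟩⟩
  refine Or.inr (Set.mem_iUnion.2 ⟨i, fun j => ⟨(hx j).1, ?_⟩⟩)
  rcases eq_or_ne j i with rfl | hji
  · simpa using (hi.trans_le (hy j)).le
  · simpa [Function.update_of_ne hji] using (hx j).2

end EuclideanSpace

open EuclideanSpace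

theorem hypervolume_eq_volume_iUnion_box {m : ℕ} (z : EuclideanSpace ℝ (Fin m))
    (Y : Finset (EuclideanSpace ℝ (Fin m))) : hypervolume z Y = volume (⋃ y ∈ Y, box y z) := rfl

theorem hypervolume_le_hypervolume_add {m : ℕ} {z : EuclideanSpace ℝ (Fin m)}
    {Y Y' : Finset (EuclideanSpace ℝ (Fin m))} {δ : ℝ}
    (hz : ∀ a ∈ Y, ∀ i, z i - a i ≤ 1) (hY : ∀ a ∈ Y, ∃ y ∈ Y', ∀ i, y i ≤ a i + δ) :
    hypervolume z Y ≤ hypervolume z Y' + Y.card * m * ENNReal.ofReal δ := by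
  have hcover : ⋃ a ∈ Y, box a z ⊆
      (⋃ y ∈ Y', box y z) ∪ ⋃ a ∈ Y, ⋃ i, box a (Function.update z i (a i + δ)) := by
    refine Set.iUnion₂_subset fun a ha => ?_
    obtain ⟨y, hy, hya⟩ := hY a ha
    refine (box_subset_box_union_iUnion_box_update hya z).trans (Set.union_subset_union ?_ ?_)
    · exact fun x hx => Set.mem_biUnion hy hx
    · exact fun x hx => Set.mem_biUnion ha hx
  have hslabs : volume (⋃ a ∈ Y, ⋃ i, box a (Function.update z i (a i + δ)))
      ≤ Y.card * m * ENNReal.ofReal δ := calc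
    _ ≤ ∑ a ∈ Y, ∑ i, volume (box a (Function.update z i (a i + δ))) :=
      (measure_biUnion_finset_le _ _).trans
        (Finset.sum_le_sum fun a _ => measure_iUnion_fintype_le _ _)
    _ ≤ ∑ _a ∈ Y, ∑ _i : Fin m, ENNReal.ofReal δ :=
      Finset.sum_le_sum fun a ha => Finset.sum_le_sum fun i _ =>
        volume_box_update_le (hz a ha) i δ
    _ = Y.card * m * ENNReal.ofReal δ := by simp [mul_assoc]
  rw [hypervolume_eq_volume_iUnion_box, hypervolume_eq_volume_iUnion_box]
  calc _ ≤ _ := measure_mono hcover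
    _ ≤ _ := measure_union_le _ _
    _ ≤ _ := by gcongr

theorem hypervolume_gap_le_linear_in_eps_general
    (m : ℕ) (ε : ℝ)
    (z : EuclideanSpace ℝ (Fin m))
    (Ystar YT : Finset (EuclideanSpace ℝ (Fin m)))
    (hbound : ∀ y ∈ Ystar ∪ YT, ∀ i, 0 ≤ z i - y i ∧ z i - y i ≤ 1)
    (happrox : ∀ ystar ∈ Ystar, ∃ y ∈ YT, ‖y - ystar‖ ≤ ε) :
    hypervolume z Ystar - hypervolume z YT
      ≤ ENNReal.ofReal ((Ystar.card : ℝ) * m * 2 ^ (m - 1) * ε) := by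
  have hcoord : ∀ a ∈ Ystar, ∃ y ∈ YT, ∀ i, y i ≤ a i + ε := by
    intro a ha
    obtain ⟨y, hy, hya⟩ := happrox a ha
    refine ⟨y, hy, fun i => ?_⟩
    have := (le_abs_self _).trans ((PiLp.norm_apply_le (y - a) i).trans hya)
    simp only [PiLp.sub_apply] at this
    linarith
  have hz : ∀ a ∈ Ystar, ∀ i, z i - a i ≤ 1 := fun a ha i =>
    (hbound a (Finset.mem_union_left _ ha) i).2
  rw [tsub_le_iff_left]
  refine (hypervolume_le_hypervolume_add hz hcoord).trans (add_le_add le_rfl ?_)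
  calc (Ystar.card : ENNReal) * m * ENNReal.ofReal ε
      = Ystar.card * m * 1 * ENNReal.ofReal ε := by rw [mul_one]
    _ ≤ Ystar.card * m * 2 ^ (m - 1) * ENNReal.ofReal ε := by
        gcongr
        exact one_le_pow₀ one_le_two
    _ = ENNReal.ofReal ((Ystar.card : ℝ) * m * 2 ^ (m - 1) * ε) := by
        rw [ENNReal.ofReal_mul (by positivity), ENNReal.ofReal_mul (by positivity),
          ENNReal.ofReal_mul (by positivity), ENNReal.ofReal_pow zero_le_two]
        simp

theorem hypervolume_gap_le_linear_in_eps
    (m : ℕ) (hm : 1 ≤ m) (ε : ℝ) (hε0 : 0 ≤ ε) (hε1 : ε ≤ 1)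
    (z : EuclideanSpace ℝ (Fin m))
    (Ystar YT : Finset (EuclideanSpace ℝ (Fin m)))
    (hbound : ∀ y ∈ Ystar ∪ YT, ∀ i, 0 ≤ z i - y i ∧ z i - y i ≤ 1)
    (happrox : ∀ ystar ∈ Ystar, ∃ y ∈ YT, ‖y - ystar‖ ≤ ε) :
    hypervolume z Ystar - hypervolume z YT
      ≤ ENNReal.ofReal ((Ystar.card : ℝ) * m * 2 ^ (m - 1) * ε) :=
  hypervolume_gap_le_linear_in_eps_general m ε z Ystar YT hbound happrox
end
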